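/- Let p be a prime, A a commutative ring, σ a ring automorphism of A with σ^p = id, Ā = A^σ/N(A), and π : A^σ → Ā the quotient map. Let B be an integral domain and χ : Ā → B a (unital) ring homomorphism. Then there exists a unique ring homomorphism χ̃ : A → B such that χ̃(a) = χ(π(a))^p for all a ∈ A^σ; explicitly, χ̃(a) = χ(π(σ^0(a)·σ^1(a)·…·σ^{p−1}(a))), and χ̃ satisfies χ̃∘σ = χ̃. -/

import Mathlib

/-- The fixed subring `A^σ` of a ring automorphism `σ` of a commutative ring `A`. -/
def fixedSubring {A : Type*} [CommRing A] (σ : A ≃+* A) : Subring A where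
  carrier := {a : A | σ a = a}
  zero_mem' := map_zero σ
  one_mem' := map_one σ
  add_mem' := by
    intro a b ha hb
    show σ (a + b) = a + b
    rw [map_add, ha, hb]
  mul_mem' := by
    intro a b ha hb
    show σ (a * b) = a * b
    rw [map_mul, ha, hb]
  neg_mem' := by
    intro a ha
    show σ (-a) = -a
    rw [map_neg, ha]

/-- The ideal `N(A)` of `A^σ` generated by the norms `N a = ∑_{i<p} σ^i a`. -/
def normIdeal (p : ℕ) {A : Type*} [CommRing A] (σ : A ≃+* A) :
    Ideal (fixedSubring σ) :=
  Ideal.span {x : fixedSubring σ |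
    ∃ a : A, (x : A) = ∑ i ∈ Finset.range p, (⇑σ)^[i] a}

/-!
The map `a ↦ π (∏ᵢ σⁱ a)` is a ring homomorphism `A → Ā`. Only additivity needs an argument:
expanding `∏ᵢ σⁱ (a + b)` gives a sum over the subsets `S ⊆ ℤ/p`, translation by `ℤ/p` permutes
these terms compatibly with `σ`, the subsets `∅` and `ℤ/p` give `∏ᵢ σⁱ b` and `∏ᵢ σⁱ a`, and
since `p` is prime every other orbit is free, so it sums to a norm. Composing with `χ` gives the
extension.

Conversely, an extension `ψ` kills every norm, so `∑ᵢ ψ ∘ σⁱ = 0`. By Dedekind's independence of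
characters the `ψ ∘ σⁱ` are not pairwise distinct, and as `p` is prime this forces `ψ ∘ σ = ψ`.
Hence `ψ a ^ p = ψ (∏ᵢ σⁱ a) = χ (π (∏ᵢ σⁱ a)) ^ p`; as `p = N 1` vanishes in the domain `B`,
Frobenius is injective there and `ψ` is determined.
-/

open Finset Pointwise

theorem Finset.exists_sum_eq_sum_sum_smul_of_free {G α M : Type*} [Group G] [Fintype G]
    [MulAction G α] [AddCommMonoid M] (X : Finset α)
    (hX : ∀ g : G, ∀ x ∈ X, g • x ∈ X) (hfree : ∀ g : G, ∀ x ∈ X, g • x = x → g = 1)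
    (f : α → M) : ∃ R : Finset α, ∑ x ∈ X, f x = ∑ g : G, ∑ r ∈ R, f (g • r) := by
  classical
  let rep (x : α) : α := (Quotient.mk'' x : MulAction.orbitRel.Quotient G α).out
  have rep_mem (x : α) : rep x ∈ MulAction.orbit G x :=
    Quotient.mk_out' (s₁ := MulAction.orbitRel G α) x
  have rep_eq {x y : α} (h : y ∈ MulAction.orbit G x) : rep y = rep x :=
    congrArg Quotient.out (Quotient.sound' h)
  have rep_mem_of_mem {x : α} (hx : x ∈ X) : rep x ∈ X := by
    obtain ⟨k, hk⟩ := rep_mem x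
    exact hk ▸ hX k x hx
  refine ⟨X.image rep, ?_⟩
  rw [← Finset.sum_product']
  refine (Finset.sum_bij (fun gr _ => gr.1 • gr.2) ?_ ?_ ?_ fun _ _ => rfl).symm
  · simp only [mem_product, mem_univ, true_and, mem_image]
    rintro ⟨g, _⟩ ⟨x, hx, rfl⟩
    exact hX g _ (rep_mem_of_mem hx)
  · simp only [mem_product, mem_univ, true_and, mem_image]
    rintro ⟨g, _⟩ ⟨x, hx, rfl⟩ ⟨h, _⟩ ⟨y, hy, rfl⟩ hgh
    have hxy : rep x = rep y := by
      have h_orbit : rep x ∈ MulAction.orbit G (rep y) :=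
        ⟨g⁻¹ * h, by simp only [mul_smul, ← hgh, inv_smul_smul]⟩
      rw [← rep_eq (rep_mem x), rep_eq h_orbit, rep_eq (rep_mem y)]
    rw [← hxy] at hgh ⊢
    have hgh' : h⁻¹ * g = 1 :=
      hfree _ _ (rep_mem_of_mem hx) (by rw [mul_smul, hgh, inv_smul_smul])
    rw [inv_mul_eq_one.1 hgh']
  · intro x hx
    obtain ⟨k, hk⟩ := rep_mem x
    exact ⟨(k⁻¹, rep x), mem_product.2 ⟨mem_univ _, mem_image_of_mem rep hx⟩,
      by simp [← hk]⟩

theorem Finset.eq_one_of_smul_finset_eq {G : Type*} [Group G] [Fintype G] [DecidableEq G]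
    [Fact (Nat.card G).Prime] {S : Finset G} (hS : S.Nonempty) (hS_ne : S ≠ univ) {g : G}
    (hg : g • S = S) : g = 1 := by
  obtain h | h := (MulAction.stabilizer G S).eq_bot_or_eq_top_of_prime_card
  · exact Subgroup.mem_bot.1 (h ▸ MulAction.mem_stabilizer_iff.2 hg)
  · obtain ⟨s, hs⟩ := hS
    refine absurd (eq_univ_of_forall fun t => ?_) hS_ne
    have hts : (t * s⁻¹) • S = S := MulAction.mem_stabilizer_iff.1 (h ▸ Subgroup.mem_top _)
    exact hts ▸ mem_smul_finset.2 ⟨s, hs, by simp⟩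

section Norm

variable {G A : Type*} [Group G] [CommRing A] (ρ : G →* RingAut A)

theorem prod_smul_finset_apply [DecidableEq G] (h : G) (S : Finset G) (x : A) :
    ∏ g ∈ h • S, ρ g x = ρ h (∏ g ∈ S, ρ g x) := by
  rw [smul_finset_def, prod_image fun _ _ _ _ => smul_left_cancel h, map_prod]
  simp only [smul_eq_mul, map_mul, RingAut.mul_apply]

theorem exists_prod_apply_add_eq_add_add_sum [Fintype G] [Fact (Nat.card G).Prime] (a b : A) :
    ∃ c, ∏ g, ρ g (a + b) = ∏ g, ρ g a + ∏ g, ρ g b + ∑ g, ρ g c := by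
  classical
  let T (S : Finset G) : A := (∏ g ∈ S, ρ g a) * ∏ g ∈ univ \ S, ρ g b
  have T_smul (h : G) (S : Finset G) : T (h • S) = ρ h (T S) := by
    show (∏ g ∈ h • S, ρ g a) * ∏ g ∈ univ \ h • S, ρ g b = _
    rw [← smul_finset_univ (a := h), ← smul_finset_sdiff]
    simp only [T, prod_smul_finset_apply, map_mul]
  let X := (univ.powerset.erase univ).erase (∅ : Finset G)
  have mem_X {S : Finset G} : S ∈ X ↔ S.Nonempty ∧ S ≠ univ := by
    simp [X, nonempty_iff_ne_empty]
  obtain ⟨R, hR⟩ := X.exists_sum_eq_sum_sum_smul_of_free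
    (fun h S hS => mem_X.2 ⟨(mem_X.1 hS).1.smul_finset, by
      rw [Ne, smul_finset_eq_univ]; exact (mem_X.1 hS).2⟩)
    (fun h S hS => eq_one_of_smul_finset_eq (mem_X.1 hS).1 (mem_X.1 hS).2) T
  refine ⟨∑ r ∈ R, T r, ?_⟩
  have h_empty : (∅ : Finset G) ∈ univ.powerset.erase univ :=
    mem_erase.2 ⟨univ_nonempty.ne_empty.symm, empty_mem_powerset _⟩
  calc ∏ g, ρ g (a + b) = ∑ S ∈ univ.powerset, T S := by
        simp only [map_add]; exact prod_add _ _ _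
    _ = T univ + (T ∅ + ∑ S ∈ X, T S) := by
      rw [add_sum_erase _ _ h_empty, add_sum_erase _ _ (mem_powerset_self _)]
    _ = _ := by
      simp only [hR, T_smul, ← map_sum, T, sdiff_self, bot_eq_empty, sdiff_empty, prod_empty,
        mul_one, one_mul, add_assoc]

theorem apply_apply_eq_of_sum_eq_zero [Fintype G] [Fact (Nat.card G).Prime]
    {B : Type*} [CommRing B] [IsDomain B] (ψ : A →+* B) (hψ : ∀ x, ∑ g, ψ (ρ g x) = 0)
    (g : G) (x : A) : ψ (ρ g x) = ψ x := by
  let H : Subgroup G :=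
    { carrier := {g | ∀ x, ψ (ρ g x) = ψ x}
      one_mem' := fun _ => by simp
      mul_mem' := fun ha hb x => by simp [ha _, hb _]
      inv_mem' := fun {g} hg x => by simpa using (hg (ρ g⁻¹ x)).symm }
  obtain hH | hH := H.eq_bot_or_eq_top_of_prime_card
  · exfalso
    let χ (g : G) : A →* B := ψ.toMonoidHom.comp (ρ g).toMonoidHom
    have χ_inj : Function.Injective χ := fun g h hgh => by
      have hmem : h * g⁻¹ ∈ H := fun x => by
        simpa [χ] using (DFunLike.congr_fun hgh (ρ g⁻¹ x)).symm
      rw [hH, Subgroup.mem_bot, mul_inv_eq_one] at hmem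
      exact hmem.symm
    have hli := Fintype.linearIndependent_iff.1
      ((linearIndependent_monoidHom A B).comp χ χ_inj) (fun _ => 1)
      (funext fun x => by simpa [χ] using hψ x)
    exact one_ne_zero (hli 1)
  · exact (hH ▸ Subgroup.mem_top g : g ∈ H) x

theorem apply_prod_apply [Fintype G] (h : G) (a : A) : ρ h (∏ g, ρ g a) = ∏ g, ρ g a := by
  rw [map_prod]
  simp only [← RingAut.mul_apply, ← map_mul]
  exact Fintype.prod_equiv (Equiv.mulLeft h) _ _ fun _ => rfl

theorem apply_sum_apply [Fintype G] (h : G) (a : A) : ρ h (∑ g, ρ g a) = ∑ g, ρ g a := by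
  rw [map_sum]
  simp only [← RingAut.mul_apply, ← map_mul]
  exact Fintype.sum_equiv (Equiv.mulLeft h) _ _ fun _ => rfl

end Norm

/-- `σ` may have order `1` rather than `p`, so the group acting on `A` is `ℤ/p` via
`k ↦ σ ^ k`, not the subgroup generated by `σ`. -/
def zmodPowHom {M : Type*} [Monoid M] {p : ℕ} [NeZero p] (x : M) (hx : x ^ p = 1) :
    Multiplicative (ZMod p) →* M where
  toFun k := x ^ k.toAdd.val
  map_one' := by simp
  map_mul' k l := by
    simp only [toAdd_mul, ZMod.val_add, ← pow_add]
    exact (pow_eq_pow_mod _ hx).symm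

@[to_additive]
theorem prod_zmod_val {M : Type*} [CommMonoid M] (p : ℕ) [NeZero p] (f : ℕ → M) :
    ∏ k : ZMod p, f k.val = ∏ i ∈ range p, f i := by
  obtain ⟨n, rfl⟩ := Nat.exists_eq_succ_of_ne_zero (NeZero.ne p)
  exact Fin.prod_univ_eq_prod_range f (n + 1)

section Iterate

variable {A : Type*} [CommRing A] {p : ℕ} [NeZero p] {σ : A ≃+* A} (hσ : σ ^ p = 1)

theorem zmodPowHom_apply (k : Multiplicative (ZMod p)) (a : A) :
    zmodPowHom σ hσ k a = (⇑σ)^[k.toAdd.val] a := by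
  simp [zmodPowHom, RingAut.coe_pow]

theorem zmodPowHom_ofAdd_one : zmodPowHom σ hσ (.ofAdd 1) = σ := by
  simp [zmodPowHom, ZMod.val_one_eq_one_mod, ← pow_eq_pow_mod 1 hσ]

theorem prod_zmodPowHom_apply (a : A) :
    ∏ k, zmodPowHom σ hσ k a = ∏ i ∈ range p, (⇑σ)^[i] a := by
  simp only [zmodPowHom_apply]
  exact (Fintype.prod_equiv Multiplicative.toAdd _ (fun k : ZMod p => (⇑σ)^[k.val] a)
    fun _ => rfl).trans (prod_zmod_val p fun i => (⇑σ)^[i] a)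

theorem sum_zmodPowHom_apply (a : A) :
    ∑ k, zmodPowHom σ hσ k a = ∑ i ∈ range p, (⇑σ)^[i] a := by
  simp only [zmodPowHom_apply]
  exact (Fintype.sum_equiv Multiplicative.toAdd _ (fun k : ZMod p => (⇑σ)^[k.val] a)
    fun _ => rfl).trans (sum_zmod_val p fun i => (⇑σ)^[i] a)

end Iterate

instance {p : ℕ} [Fact p.Prime] : Fact (Nat.card (Multiplicative (ZMod p))).Prime :=
  ⟨by rw [Nat.card_eq_fintype_card, Fintype.card_multiplicative, ZMod.card]; exact Fact.out⟩

section Frobenius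

variable {A : Type*} [CommRing A] {p : ℕ} {σ : A ≃+* A}

theorem mem_normIdeal_iff (x : fixedSubring σ) :
    x ∈ normIdeal p σ ↔ ∃ a : A, (x : A) = ∑ i ∈ range p, (⇑σ)^[i] a := by
  refine ⟨fun hx => ?_, fun hx => Ideal.subset_span hx⟩
  induction hx using Submodule.span_induction with
  | mem y hy => exact hy
  | zero => exact ⟨0, by simp⟩
  | add y z _ _ hy hz =>
    obtain ⟨a, ha⟩ := hy
    obtain ⟨b, hb⟩ := hz
    exact ⟨a + b, by simp [ha, hb, sum_add_distrib]⟩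
  | smul r y _ hy =>
    obtain ⟨a, ha⟩ := hy
    refine ⟨r * a, ?_⟩
    simp [ha, mul_sum, Function.iterate_fixed r.2]

theorem mk_sum_iterate_eq_zero (c : A)
    (h : ∑ i ∈ range p, (⇑σ)^[i] c ∈ fixedSubring σ) :
    Ideal.Quotient.mk (normIdeal p σ) ⟨_, h⟩ = 0 :=
  Ideal.Quotient.eq_zero_iff_mem.2 (Ideal.subset_span ⟨c, rfl⟩)

theorem natCast_mem_normIdeal : (p : fixedSubring σ) ∈ normIdeal p σ :=
  Ideal.subset_span ⟨1, by simp⟩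

theorem prod_iterate_mem_fixedSubring [NeZero p] (hσ : σ ^ p = 1) (a : A) :
    ∏ i ∈ range p, (⇑σ)^[i] a ∈ fixedSubring σ := by
  have := apply_prod_apply (zmodPowHom σ hσ) (.ofAdd 1) a
  rwa [zmodPowHom_ofAdd_one, prod_zmodPowHom_apply] at this

theorem sum_iterate_mem_fixedSubring [NeZero p] (hσ : σ ^ p = 1) (a : A) :
    ∑ i ∈ range p, (⇑σ)^[i] a ∈ fixedSubring σ := by
  have := apply_sum_apply (zmodPowHom σ hσ) (.ofAdd 1) a
  rwa [zmodPowHom_ofAdd_one, sum_zmodPowHom_apply] at this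

def normProd [NeZero p] (hσ : σ ^ p = 1) : A →* fixedSubring σ where
  toFun a := ⟨∏ i ∈ range p, (⇑σ)^[i] a, prod_iterate_mem_fixedSubring hσ a⟩
  map_one' := Subtype.ext (by simp)
  map_mul' a b := Subtype.ext (by simp [prod_mul_distrib])

variable [Fact p.Prime] (hσ : σ ^ p = 1)

theorem exists_normProd_add (a b : A) : ∃ c, (normProd hσ (a + b) : A) =
    normProd hσ a + normProd hσ b + ∑ i ∈ range p, (⇑σ)^[i] c := by
  obtain ⟨c, hc⟩ := exists_prod_apply_add_eq_add_add_sum (zmodPowHom σ hσ) a b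
  simp only [prod_zmodPowHom_apply, sum_zmodPowHom_apply] at hc
  exact ⟨c, hc⟩

def normProdHom : A →+* fixedSubring σ ⧸ normIdeal p σ :=
  RingHom.mk' ((Ideal.Quotient.mk _).toMonoidHom.comp (normProd hσ)) fun a b => by
    obtain ⟨c, hc⟩ := exists_normProd_add hσ a b
    have : normProd hσ (a + b) = normProd hσ a + normProd hσ b +
        ⟨_, sum_iterate_mem_fixedSubring hσ c⟩ := Subtype.ext hc
    simp [this, mk_sum_iterate_eq_zero]

theorem normProdHom_of_mem {a : A} (ha : a ∈ fixedSubring σ) :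
    normProdHom hσ a = Ideal.Quotient.mk _ ⟨a, ha⟩ ^ p := by
  show Ideal.Quotient.mk _ (normProd hσ a) = _
  rw [← map_pow]
  congr 1
  apply Subtype.ext
  simp [normProd, Function.iterate_fixed ha]

variable {B : Type*} [CommRing B] [IsDomain B] {χ : fixedSubring σ ⧸ normIdeal p σ →+* B}
  {ψ : A →+* B}
  (hψ : ∀ (a : A) (ha : a ∈ fixedSubring σ), ψ a = χ (Ideal.Quotient.mk _ ⟨a, ha⟩) ^ p)
include hσ hψ

theorem apply_apply_eq_of_eq_pow (a : A) : ψ (σ a) = ψ a := by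
  rw [← zmodPowHom_ofAdd_one hσ]
  refine apply_apply_eq_of_sum_eq_zero _ ψ (fun x => ?_) _ a
  have h_mem := sum_iterate_mem_fixedSubring hσ x
  rw [← map_sum, sum_zmodPowHom_apply, hψ _ h_mem, mk_sum_iterate_eq_zero, map_zero,
    zero_pow (Fact.out : p.Prime).ne_zero]

theorem eq_comp_normProdHom_of_eq_pow : ψ = χ.comp (normProdHom hσ) := by
  have : CharP B p := (CharP.charP_iff_prime_eq_zero Fact.out).2 <| by
    rw [← map_natCast χ, ← map_natCast (Ideal.Quotient.mk (normIdeal p σ)),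
      Ideal.Quotient.eq_zero_iff_mem.2 natCast_mem_normIdeal, map_zero]
  ext a
  apply frobenius_inj B p
  have h_inv (n : ℕ) (x : A) : ψ ((⇑σ)^[n] x) = ψ x :=
    congrFun (Function.iterate_invariant (funext (apply_apply_eq_of_eq_pow hσ hψ)) n) x
  calc ψ a ^ p = ψ (normProd hσ a) := by
        show _ = ψ (∏ i ∈ range p, (⇑σ)^[i] a)
        rw [map_prod, prod_congr rfl fun i _ => h_inv i a, prod_const, card_range]
    _ = _ := hψ _ _

end Frobenius

/--
Let `p` be a prime, `A` a commutative ring, `σ` a ring automorphism of `A` with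
`σ^p = id`, `Ā = A^σ/N(A)` with quotient map `π`, `B` an integral domain and
`χ : Ā → B` a ring homomorphism.  Then there is a unique ring homomorphism
`χ̃ : A → B` with `χ̃(a) = χ(π a)^p` for all `a ∈ A^σ`; explicitly
`χ̃(a) = χ(π(σ⁰(a)⋯σ^{p-1}(a)))`, and `χ̃ ∘ σ = χ̃`.
(The first two clauses record that `N(A)` consists exactly of the norms and that
products of conjugates lie in `A^σ`.)
-/
theorem unique_pth_power_extension_of_character
    (p : ℕ) (hp : p.Prime)
    (A : Type*) [CommRing A]
    (σ : A ≃+* A) (hσ : ∀ a, (⇑σ)^[p] a = a)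
    (B : Type*) [CommRing B] [IsDomain B]
    (χ : (↥(fixedSubring σ) ⧸ normIdeal p σ) →+* B) :
    -- the ideal N(A) consists exactly of the norms
    ((∀ x : fixedSubring σ,
        x ∈ normIdeal p σ ↔ ∃ a : A, (x : A) = ∑ i ∈ Finset.range p, (⇑σ)^[i] a)
    -- products of conjugates are fixed by σ
    ∧ (∀ a : A, (∏ i ∈ Finset.range p, (⇑σ)^[i] a) ∈ fixedSubring σ)
    -- existence and uniqueness of the extension of χ^p
    ∧ (∃! χt : A →+* B,
        ∀ (a : A) (ha : a ∈ fixedSubring σ),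
          χt a = (χ (Ideal.Quotient.mk (normIdeal p σ) ⟨a, ha⟩)) ^ p)
    -- the extension is given explicitly by the product formula and is σ-invariant
    ∧ (∀ χt : A →+* B,
        (∀ (a : A) (ha : a ∈ fixedSubring σ),
          χt a = (χ (Ideal.Quotient.mk (normIdeal p σ) ⟨a, ha⟩)) ^ p) →
        (∀ (a : A) (h : (∏ i ∈ Finset.range p, (⇑σ)^[i] a) ∈ fixedSubring σ),
          χt a = χ (Ideal.Quotient.mk (normIdeal p σ)
            ⟨∏ i ∈ Finset.range p, (⇑σ)^[i] a, h⟩)) ∧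
        (∀ a : A, χt (σ a) = χt a))) := by
  have := Fact.mk hp
  have hσ' : σ ^ p = 1 := RingEquiv.ext fun a => by rw [RingAut.coe_pow]; exact hσ a
  have h_ext (a : A) (ha : a ∈ fixedSubring σ) :
      χ.comp (normProdHom hσ') a = χ (Ideal.Quotient.mk _ ⟨a, ha⟩) ^ p := by
    rw [RingHom.comp_apply, normProdHom_of_mem hσ' ha, map_pow]
  refine ⟨mem_normIdeal_iff, prod_iterate_mem_fixedSubring hσ',
    ⟨_, h_ext, fun ψ hψ => eq_comp_normProdHom_of_eq_pow hσ' hψ⟩,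
    fun ψ hψ => ⟨fun a _ => ?_, apply_apply_eq_of_eq_pow hσ' hψ⟩⟩
  rw [eq_comp_normProdHom_of_eq_pow hσ' hψ]
  rfl
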